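/- arXiv:1204.4494 — 7 statements merged into one kernel-verified Lean document; each statement's English description precedes it below -/
import Mathlib

section
/- If s' is obtained from a uniform random subset s of size n of U (with |U| = N) by discarding a uniformly chosen subset of a of its units and independently adding a uniformly chosen subset of size n' - (n - a) from U \ s, then s' is a uniform random subset of U of size n'. -/
/-!
Fix `t` with `#t = n'`. Given `s`, the only pair `D ⊆ s`, `A ⊆ sᶜ` with `(s \ D) ∪ A = t` is
`D = s \ t`, `A = t \ s`, and it has the prescribed sizes iff `#(s ∩ t) = n - a`. Every triple
`(s, D, A)` carries the same weight, so `P(s' = t)` is the number `C(n', n - a) C(N - n', a)` of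
such `s` divided by `C(N, n) C(n, a) C(N - n, n' - n + a)`. Both this denominator and
`C(n', n - a) C(N - n', a) C(N, n')` count the ordered splittings of `U` into blocks of sizes
`n - a`, `a`, `n' - n + a` and `N - n' - a`.
-/

open Finset

namespace Nat

theorem choose_mul_choose_sub_comm (n a b : ℕ) :
    n.choose a * (n - a).choose b = n.choose b * (n - b).choose a := by
  have ha := choose_mul (n := n) (le_add_right a b)
  have hb := choose_mul (n := n) (le_add_left b a)
  rw [Nat.add_sub_cancel_left] at ha
  rw [Nat.add_sub_cancel] at hb
  rw [← ha, ← hb, choose_symm_add]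

theorem choose_mul_choose_mul_choose_comm (N k a m : ℕ) :
    N.choose (k + m) * (k + m).choose k * (N - (k + m)).choose a =
      N.choose (k + a) * (k + a).choose a * (N - (k + a)).choose m := by
  rw [← choose_symm_add, choose_mul (le_add_right k m), choose_mul (le_add_right k a),
    Nat.add_sub_cancel_left, Nat.add_sub_cancel_left, ← Nat.sub_sub, ← Nat.sub_sub,
    Nat.mul_assoc, Nat.mul_assoc, choose_mul_choose_sub_comm (N - k) m a]

end Nat

namespace Finset

variable {α : Type*} [DecidableEq α]

theorem sdiff_union_eq_iff {s D A t : Finset α} (hD : D ⊆ s) (hA : Disjoint A s) :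
    s \ D ∪ A = t ↔ D = s \ t ∧ A = t \ s := by
  rw [subset_iff] at hD
  rw [disjoint_left] at hA
  simp only [Finset.ext_iff, mem_union, mem_sdiff]
  grind

variable [Fintype α]

theorem sum_powersetCard_sum_powersetCard_compl_ite_sdiff_union_eq {M : Type*}
    [AddCommMonoid M] (s t : Finset α) (a m : ℕ) (c : M) :
    ∑ D ∈ s.powersetCard a, ∑ A ∈ sᶜ.powersetCard m, (if s \ D ∪ A = t then c else 0) =
      if #(s \ t) = a ∧ #(t \ s) = m then c else 0 := by
  have hcond : ∀ p ∈ s.powersetCard a ×ˢ sᶜ.powersetCard m,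
      (s \ p.1 ∪ p.2 = t ↔ p = (s \ t, t \ s)) := by
    rintro ⟨D, A⟩ hp
    simp only [mem_product, mem_powersetCard, subset_compl_iff_disjoint_right] at hp
    rw [sdiff_union_eq_iff hp.1.1 hp.2.1, Prod.mk.injEq]
  rw [← sum_product' (f := fun D A => if s \ D ∪ A = t then c else 0),
    sum_congr rfl fun p hp => if_congr (hcond p hp) rfl rfl, sum_ite_eq']
  simp [sdiff_subset, subset_compl_iff_disjoint_right, sdiff_disjoint]

theorem card_filter_card_inter_card_sdiff (t : Finset α) (k m : ℕ) :
    #{s : Finset α | #(s ∩ t) = k ∧ #(s \ t) = m} = (#t).choose k * (#tᶜ).choose m := by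
  have hsplit : ∀ u v : Finset α, u ⊆ t → Disjoint v t → (u ∪ v) ∩ t = u ∧ (u ∪ v) \ t = v :=
    fun u v hu hv => ⟨by rw [union_inter_distrib_right, inter_eq_left.mpr hu,
      disjoint_iff_inter_eq_empty.mp hv, union_empty], by rw [union_sdiff_distrib,
      sdiff_eq_empty_iff_subset.mpr hu, sdiff_eq_self_of_disjoint hv, empty_union]⟩
  rw [← card_powersetCard, ← card_powersetCard, ← card_product]
  refine card_nbij' (fun s => (s ∩ t, s \ t)) (fun p => p.1 ∪ p.2) ?_ ?_ ?_ ?_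
  · intro s hs
    simp_all [inter_subset_right, subset_compl_iff_disjoint_right, sdiff_disjoint]
  · rintro ⟨u, v⟩ hp
    simp only [coe_product, Set.mem_prod, mem_coe, mem_powersetCard,
      subset_compl_iff_disjoint_right] at hp
    obtain ⟨hinter, hsdiff⟩ := hsplit u v hp.1.1 hp.2.1
    simp [hinter, hsdiff, hp.1.2, hp.2.2]
  · intro s _
    exact sup_inf_sdiff s t
  · rintro ⟨u, v⟩ hp
    simp only [coe_product, Set.mem_prod, mem_coe, mem_powersetCard,
      subset_compl_iff_disjoint_right] at hp
    obtain ⟨hinter, hsdiff⟩ := hsplit u v hp.1.1 hp.2.1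
    simp [hinter, hsdiff]

end Finset

/-- Partial replacement preserves SRSWOR: if `s` is a uniform size-`n` subset of `U`
(`|U| = N`), `D` a uniform size-`a` subset of `s`, and (independently given `s, D`)
`A` a uniform size-`(n' - (n - a))` subset of `U \ s`, then `s' = (s \ D) ∪ A` is a
uniform size-`n'` subset of `U`: for every size-`n'` set `t`,
`P(s' = t) = 1 / C(N, n')`. -/
theorem partial_replacement_uniform (N a n n' : ℕ) (ha : a ≤ n) (hn : n ≤ N)
    (hlow : n - a ≤ n') (hhigh : n' ≤ N - a)
    (t : Finset (Fin N)) (ht : t.card = n') :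
    ∑ s ∈ (Finset.univ : Finset (Fin N)).powersetCard n,
      ∑ D ∈ s.powersetCard a,
        ∑ A ∈ sᶜ.powersetCard (n' - (n - a)),
          (if (s \ D) ∪ A = t then
            (1 : ℝ) / ((((Finset.univ : Finset (Fin N)).powersetCard n).card : ℝ) *
              ((s.powersetCard a).card : ℝ) * ((sᶜ.powersetCard (n' - (n - a))).card : ℝ))
          else 0) =
      1 / (((Finset.univ : Finset (Fin N)).powersetCard n').card : ℝ) := by
  set m := n' - (n - a)
  have hweight : ∀ s ∈ powersetCard n (univ : Finset (Fin N)),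
      (#(powersetCard n (univ : Finset (Fin N))) : ℝ) * #(s.powersetCard a) *
        #(sᶜ.powersetCard m) = (N.choose n : ℝ) * n.choose a * (N - n).choose m := by
    intro s hs
    rw [card_powersetCard, card_powersetCard, card_powersetCard, card_compl,
      (mem_powersetCard.mp hs).2, card_univ, Fintype.card_fin]
  rw [sum_congr rfl fun s hs => by rw [hweight s hs]]
  simp_rw [sum_powersetCard_sum_powersetCard_compl_ite_sdiff_union_eq]
  have hfilter : {s ∈ powersetCard n (univ : Finset (Fin N)) | #(s \ t) = a ∧ #(t \ s) = m} =
      ({s | #(s ∩ t) = n - a ∧ #(s \ t) = a} : Finset (Finset (Fin N))) := by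
    ext s
    have hs := card_sdiff_add_card_inter s t
    have ht' := card_sdiff_add_card_inter t s
    rw [inter_comm] at ht'
    simp only [mem_filter, mem_powersetCard, subset_univ, true_and, mem_univ]
    omega
  rw [← sum_filter, sum_const, nsmul_eq_mul, hfilter, card_filter_card_inter_card_sdiff,
    card_compl, Fintype.card_fin, ht, card_powersetCard, card_univ, Fintype.card_fin]
  have hcount := Nat.choose_mul_choose_mul_choose_comm N (n - a) a m
  rw [show n - a + m = n' by omega, Nat.sub_add_cancel ha] at hcount
  have hpos : ∀ {p q : ℕ}, q ≤ p → (p.choose q : ℝ) ≠ 0 := fun h =>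
    Nat.cast_ne_zero.mpr (Nat.choose_pos h).ne'
  rw [mul_one_div, div_eq_div_iff (mul_ne_zero (mul_ne_zero (hpos hn) (hpos ha))
    (hpos (by omega))) (hpos (by omega)), one_mul]
  norm_cast
  rw [← hcount]
  ring
end

section
/- Under a one-step partial replacement from a uniform size-n sample s to a sample s' (discarding a uniform size-a subset of s and adding a uniform subset of size n' - (n-a) of the complement), the conditional probability P(k ∈ s' | k ∈ s) equals (1 - n/N)λ + n'/N, where λ = (1 - a/n - n'/N)/(1 - n/N), provided n < N. -/
/-!
Conditioning on `k ∈ s`, the triples `(s, D, A)` split into fibres over `s`; each fibre is a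
product of the choices of `D ⊆ s` and of `A ⊆ sᶜ`, and only the first factor sees whether `k`
survives. So the probability is `C(n - 1, a) / C(n, a) = 1 - a/n`, which is `(1 - f)λ + f'`.
-/

open Finset

variable {α : Type*} [Fintype α] [DecidableEq α]

/-- Triples `(s, D, A)`: a sample `s ∈ S`, the part `D ⊆ s` it discards, the part `A ⊆ sᶜ` it
adds, with `D` subject to `Q s D`. -/
def replacementTriples (S : Finset (Finset α)) (a m : ℕ) (Q : Finset α → Finset α → Prop)
    [∀ s D, Decidable (Q s D)] : Finset (Finset α × Finset α × Finset α) :=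
  {p | p.1 ∈ S ∧ p.2.1 ∈ p.1.powersetCard a ∧ Q p.1 p.2.1 ∧ p.2.2 ∈ p.1ᶜ.powersetCard m}

section replacementTriples

variable {S : Finset (Finset α)} {a m : ℕ} {Q : Finset α → Finset α → Prop}
  [∀ s D, Decidable (Q s D)]

@[simp]
theorem mem_replacementTriples {p : Finset α × Finset α × Finset α} :
    p ∈ replacementTriples S a m Q ↔
      p.1 ∈ S ∧ p.2.1 ∈ p.1.powersetCard a ∧ Q p.1 p.2.1 ∧ p.2.2 ∈ p.1ᶜ.powersetCard m := by
  simp [replacementTriples]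

theorem card_replacementTriples :
    #(replacementTriples S a m Q) =
      ∑ s ∈ S, #{D ∈ s.powersetCard a | Q s D} * #(sᶜ.powersetCard m) := by
  rw [card_eq_sum_card_fiberwise (f := Prod.fst) (t := S) fun p hp =>
    (mem_replacementTriples.1 hp).1]
  refine sum_congr rfl fun s hs => ?_
  rw [← card_product]
  symm
  rw [← card_map ⟨fun q => (s, q), fun _ _ h => (Prod.ext_iff.1 h).2⟩]
  refine congrArg card (ext fun ⟨t, D, A⟩ => ?_)
  simp only [mem_filter, mem_replacementTriples, mem_map, mem_product, Prod.ext_iff, Prod.exists]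
  constructor
  · rintro ⟨D, A, ⟨⟨hD, hQ⟩, hA⟩, rfl, rfl, rfl⟩
    exact ⟨⟨hs, hD, hQ, hA⟩, rfl⟩
  · rintro ⟨⟨-, hD, hQ, hA⟩, rfl⟩
    exact ⟨D, A, ⟨⟨hD, hQ⟩, hA⟩, rfl, rfl, rfl⟩

theorem card_replacementTriples_of_forall {n c : ℕ} (hS : ∀ s ∈ S, #s = n)
    (hQ : ∀ s ∈ S, #{D ∈ s.powersetCard a | Q s D} = c) :
    #(replacementTriples S a m Q) = #S * (c * (Fintype.card α - n).choose m) := by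
  rw [card_replacementTriples, sum_const_nat fun s hs => ?_]
  rw [hQ s hs, card_powersetCard, card_compl, hS s hs]

end replacementTriples

theorem mem_sdiff_union_iff {s D A : Finset α} {k : α} (hk : k ∈ s) (hA : A ⊆ sᶜ) :
    k ∈ (s \ D) ∪ A ↔ k ∉ D := by
  simp only [mem_union, mem_sdiff, hk, true_and, or_iff_left_iff_imp]
  exact fun h => absurd hk (mem_compl.1 (hA h))

theorem filter_mem_fst_eq_replacementTriples (n a m : ℕ) (k : α) :
    ((univ.filter fun p : Finset α × Finset α × Finset α =>
        #p.1 = n ∧ p.2.1 ⊆ p.1 ∧ #p.2.1 = a ∧ p.2.2 ⊆ p.1ᶜ ∧ #p.2.2 = m).filter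
        fun p => k ∈ p.1) =
      replacementTriples {s | #s = n ∧ k ∈ s} a m fun _ _ => True := by
  refine ext fun p => ?_
  simp only [mem_filter, mem_univ, true_and, mem_replacementTriples, mem_powersetCard]
  tauto

theorem filter_mem_replacement_eq_replacementTriples (n a m : ℕ) (k : α) :
    ((univ.filter fun p : Finset α × Finset α × Finset α =>
        #p.1 = n ∧ p.2.1 ⊆ p.1 ∧ #p.2.1 = a ∧ p.2.2 ⊆ p.1ᶜ ∧ #p.2.2 = m).filter
        fun p => k ∈ p.1 ∧ k ∈ (p.1 \ p.2.1) ∪ p.2.2) =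
      replacementTriples {s | #s = n ∧ k ∈ s} a m fun _ D => k ∉ D := by
  refine ext fun p => ?_
  simp only [mem_filter, mem_univ, true_and, mem_replacementTriples, mem_powersetCard]
  constructor
  · rintro ⟨⟨hs, hD, hDa, hA, hAm⟩, hk, hk'⟩
    exact ⟨⟨hs, hk⟩, ⟨hD, hDa⟩, (mem_sdiff_union_iff hk hA).1 hk', hA, hAm⟩
  · rintro ⟨⟨hs, hk⟩, ⟨hD, hDa⟩, hkD, hA, hAm⟩
    exact ⟨⟨hs, hD, hDa, hA, hAm⟩, hk, (mem_sdiff_union_iff hk hA).2 hkD⟩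

omit [Fintype α] in
theorem card_powersetCard_filter_notMem {s : Finset α} {k : α} (hk : k ∈ s) (a : ℕ) :
    #{D ∈ s.powersetCard a | k ∉ D} = (#s - 1).choose a := by
  rw [← card_erase_of_mem hk, ← card_powersetCard]
  refine congrArg card (ext fun D => ?_)
  simp only [mem_filter, mem_powersetCard, subset_erase]
  tauto

theorem card_filter_card_eq_mem_pos {n : ℕ} (k : α) (hn : 1 ≤ n) (hN : n ≤ Fintype.card α) :
    0 < #{s : Finset α | #s = n ∧ k ∈ s} := by
  obtain ⟨s, hk, -, hs⟩ :=
    exists_subsuperset_card_eq (subset_univ {k}) (by simpa using hn) (by simpa using hN)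
  exact card_pos.2 ⟨s, by simpa [hs] using hk (mem_singleton_self k)⟩

theorem Nat.cast_choose_pred_div_choose (K : Type*) [Field K] [CharZero K] {n a : ℕ}
    (ha : a ≤ n) (hn : 0 < n) : ((n - 1).choose a : K) / n.choose a = (n - a) / n := by
  have h := Nat.choose_mul_succ_eq (n - 1) a
  rw [Nat.sub_add_cancel hn] at h
  have h' : ((n - 1).choose a : K) * n = n.choose a * (n - a) := by
    rw [← Nat.cast_sub ha]
    exact_mod_cast h
  have hchoose : (n.choose a : K) ≠ 0 := by exact_mod_cast (Nat.choose_pos ha).ne'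
  have hn' : (n : K) ≠ 0 := by exact_mod_cast hn.ne'
  rw [div_eq_div_iff hchoose hn', h']
  ring

theorem partial_replacement_cond_in_general (N a n n' : ℕ) (ha : a ≤ n) (hn1 : 1 ≤ n)
    (hn : n < N) (hhigh : n' ≤ N - a) (k : Fin N)
    (T : Finset (Finset (Fin N) × Finset (Fin N) × Finset (Fin N)))
    (hT : T = Finset.univ.filter (fun p =>
      p.1.card = n ∧ p.2.1 ⊆ p.1 ∧ p.2.1.card = a ∧
        p.2.2 ⊆ p.1ᶜ ∧ p.2.2.card = n' - (n - a))) :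
    (((T.filter (fun p => k ∈ p.1 ∧ k ∈ (p.1 \ p.2.1) ∪ p.2.2)).card : ℝ) /
        ((T.filter (fun p => k ∈ p.1)).card : ℝ)) =
      (1 - (n : ℝ) / N) *
          ((1 - (a : ℝ) / n - (n' : ℝ) / N) / (1 - (n : ℝ) / N)) + (n' : ℝ) / N := by
  subst hT
  have hS : ∀ s ∈ ({s | #s = n ∧ k ∈ s} : Finset (Finset (Fin N))), #s = n ∧ k ∈ s :=
    fun s hs => (mem_filter.1 hs).2
  rw [filter_mem_replacement_eq_replacementTriples, filter_mem_fst_eq_replacementTriples,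
    card_replacementTriples_of_forall (fun s hs => (hS s hs).1) fun s hs => by
      rw [card_powersetCard_filter_notMem (hS s hs).2, (hS s hs).1],
    card_replacementTriples_of_forall (fun s hs => (hS s hs).1) fun s hs => by
      rw [filter_true, card_powersetCard, (hS s hs).1]]
  have hSpos := card_filter_card_eq_mem_pos k hn1 (by simpa using hn.le)
  have hm : 0 < (Fintype.card (Fin N) - n).choose (n' - (n - a)) := Nat.choose_pos (by simp; omega)
  have hf : 1 - (n : ℝ) / N ≠ 0 := by
    refine sub_ne_zero.2 (Ne.symm ?_)
    rw [Ne, div_eq_one_iff_eq (by exact_mod_cast (by omega : N ≠ 0))]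
    exact_mod_cast hn.ne
  have hn0 : (n : ℝ) ≠ 0 := by exact_mod_cast (by omega : n ≠ 0)
  push_cast
  rw [mul_div_mul_left _ _ (by positivity), mul_div_mul_right _ _ (by positivity),
    Nat.cast_choose_pred_div_choose ℝ ha hn1, mul_div_cancel₀ _ hf]
  field_simp
  ring

/-- One-step partial replacement: `P(k ∈ s' | k ∈ s) = (1 - f)λ + f'` where
`f = n/N`, `f' = n'/N`, `α = a/n`, `λ = (1 - α - f')/(1 - f)`.  The joint law of
`(s, D, A)` is uniform over feasible triples (all choices are uniform and
independent), so conditional probabilities are ratios of counts. -/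
theorem partial_replacement_cond_in (N a n n' : ℕ) (ha : a ≤ n) (hn1 : 1 ≤ n)
    (hn : n < N) (hlow : n - a ≤ n') (hhigh : n' ≤ N - a) (k : Fin N)
    (T : Finset (Finset (Fin N) × Finset (Fin N) × Finset (Fin N)))
    (hT : T = Finset.univ.filter (fun p =>
      p.1.card = n ∧ p.2.1 ⊆ p.1 ∧ p.2.1.card = a ∧
        p.2.2 ⊆ p.1ᶜ ∧ p.2.2.card = n' - (n - a))) :
    (((T.filter (fun p => k ∈ p.1 ∧ k ∈ (p.1 \ p.2.1) ∪ p.2.2)).card : ℝ) /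
        ((T.filter (fun p => k ∈ p.1)).card : ℝ)) =
      (1 - (n : ℝ) / N) *
          ((1 - (a : ℝ) / n - (n' : ℝ) / N) / (1 - (n : ℝ) / N)) + (n' : ℝ) / N :=
  partial_replacement_cond_in_general N a n n' ha hn1 hn hhigh k T hT
end

section
/- Under the one-step partial replacement design, P(k ∈ s' | k ∉ s) = f' - f·λ, where f = n/N, f' = n'/N, λ = (1 - α - f')/(1 - f) and α = a/n. -/
/-!
Given `s ∌ k`, the discarded set `D ⊆ s` and the added set `A ⊆ sᶜ` are chosen independently, and
`k` enters `s'` exactly when `k ∈ A`. Among the `m`-subsets of the `N - n` units outside `s`, with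
`m = n' - (n - a)`, the fraction containing `k` is `m / (N - n)`, by
`C(c - 1, m - 1) * c = m * C(c, m)`. What remains is the identity `m / (N - n) = f' - f λ`.
-/

open Finset

theorem card_filter_mem_prod_prod {α β γ : Type*} [Fintype α] [Fintype β] [Fintype γ]
    [DecidableEq α] [DecidableEq β] [DecidableEq γ]
    (S : Finset α) (F : α → Finset β) (G : α → Finset γ) :
    #{p : α × β × γ | p.1 ∈ S ∧ p.2.1 ∈ F p.1 ∧ p.2.2 ∈ G p.1} = ∑ s ∈ S, #(F s) * #(G s) := by
  simp [card_filter, Fintype.sum_prod_type, ite_and]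

theorem card_filter_mem_powersetCard_mul_card {α : Type*} [DecidableEq α] {k : α}
    {c : Finset α} (hk : k ∈ c) (m : ℕ) :
    #{A ∈ c.powersetCard m | k ∈ A} * #c = m * #(c.powersetCard m) := by
  cases m with
  | zero => simp
  | succ m =>
    have h := card_filter_powersetCard_subset {k} c (m + 1) (by simpa) (by simp)
    simp only [singleton_subset_iff, card_singleton, add_tsub_cancel_right] at h
    obtain ⟨c', hc'⟩ : ∃ c', #c = c' + 1 := ⟨#c - 1, by have := card_pos.mpr ⟨k, hk⟩; omega⟩
    rw [h, card_powersetCard, hc', add_tsub_cancel_right, mul_comm, Nat.add_one_mul_choose_eq,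
      mul_comm]

section ReplacementDesign

variable {α : Type*} [Fintype α] [DecidableEq α]

/-- Triples `(s, D, A)`: the sample `s`, the discarded units `D ⊆ s` and the added units
`A ⊆ sᶜ`; the new sample is `s' = (s \ D) ∪ A`. -/
def replacementDesign (n a m : ℕ) : Finset (Finset α × Finset α × Finset α) :=
  univ.filter fun p =>
    p.1.card = n ∧ p.2.1 ⊆ p.1 ∧ p.2.1.card = a ∧ p.2.2 ⊆ p.1ᶜ ∧ p.2.2.card = m

variable {n a m : ℕ} (k : α)

theorem card_filter_not_mem_eq_sum :
    #{p ∈ replacementDesign n a m | k ∉ p.1} =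
      ∑ s ∈ {s : Finset α | #s = n ∧ k ∉ s}, #(s.powersetCard a) * #(sᶜ.powersetCard m) := by
  rw [← card_filter_mem_prod_prod, replacementDesign, filter_filter]
  congr 1
  apply filter_congr
  simp only [mem_univ, true_and, mem_filter, mem_powersetCard]
  tauto

theorem card_filter_enters_eq_sum :
    #{p ∈ replacementDesign n a m | k ∉ p.1 ∧ k ∈ (p.1 \ p.2.1) ∪ p.2.2} =
      ∑ s ∈ {s : Finset α | #s = n ∧ k ∉ s},
        #(s.powersetCard a) * #{A ∈ sᶜ.powersetCard m | k ∈ A} := by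
  rw [← card_filter_mem_prod_prod, replacementDesign, filter_filter]
  congr 1
  apply filter_congr
  simp only [mem_univ, true_and, mem_filter, mem_powersetCard, mem_union, mem_sdiff]
  tauto

theorem card_filter_enters_mul_card_sub :
    #{p ∈ replacementDesign n a m | k ∉ p.1 ∧ k ∈ (p.1 \ p.2.1) ∪ p.2.2} *
        (Fintype.card α - n) =
      m * #{p ∈ replacementDesign n a m | k ∉ p.1} := by
  rw [card_filter_enters_eq_sum, card_filter_not_mem_eq_sum, sum_mul, mul_sum]
  refine sum_congr rfl fun s hs => ?_
  simp only [mem_filter, mem_univ, true_and] at hs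
  rw [← hs.1, ← card_compl, mul_assoc, card_filter_mem_powersetCard_mul_card (mem_compl.2 hs.2)]
  ring

theorem card_filter_not_mem_replacementDesign_pos (ha : a ≤ n) (hn : n < Fintype.card α)
    (hm : m ≤ Fintype.card α - n) : 0 < #{p ∈ replacementDesign n a m | k ∉ p.1} := by
  obtain ⟨s, hsk, rfl⟩ := exists_subset_card_eq (s := {k}ᶜ) (n := n)
    (by rw [card_compl, card_singleton]; omega)
  obtain ⟨D, hDs, rfl⟩ := exists_subset_card_eq ha
  obtain ⟨A, hAs, rfl⟩ := exists_subset_card_eq (s := sᶜ) (n := m)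
    (by rw [card_compl]; exact hm)
  refine card_pos.2 ⟨(s, D, A), ?_⟩
  simp only [replacementDesign, mem_filter, mem_univ, true_and, hDs, hAs]
  exact fun h => by simpa using hsk h

end ReplacementDesign

/-- One-step partial replacement: `P(k ∈ s' | k ∉ s) = f' - f·λ` where
`f = n/N`, `f' = n'/N`, `α = a/n`, `λ = (1 - α - f')/(1 - f)`.  The joint law of
`(s, D, A)` is uniform over feasible triples, so conditional probabilities are
ratios of counts. -/
theorem partial_replacement_cond_out (N a n n' : ℕ) (ha : a ≤ n) (hn1 : 1 ≤ n)
    (hn : n < N) (hlow : n - a ≤ n') (hhigh : n' ≤ N - a) (k : Fin N)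
    (T : Finset (Finset (Fin N) × Finset (Fin N) × Finset (Fin N)))
    (hT : T = Finset.univ.filter (fun p =>
      p.1.card = n ∧ p.2.1 ⊆ p.1 ∧ p.2.1.card = a ∧
        p.2.2 ⊆ p.1ᶜ ∧ p.2.2.card = n' - (n - a))) :
    (((T.filter (fun p => k ∉ p.1 ∧ k ∈ (p.1 \ p.2.1) ∪ p.2.2)).card : ℝ) /
        ((T.filter (fun p => k ∉ p.1)).card : ℝ)) =
      (n' : ℝ) / N -
        ((n : ℝ) / N) * ((1 - (a : ℝ) / n - (n' : ℝ) / N) / (1 - (n : ℝ) / N)) := by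
  change T = replacementDesign n a (n' - (n - a)) at hT
  subst hT
  have hcross := card_filter_enters_mul_card_sub (n := n) (a := a) (m := n' - (n - a)) k
  have hpos := card_filter_not_mem_replacementDesign_pos (m := n' - (n - a)) k ha
    (by simpa using hn) (by simp only [Fintype.card_fin]; omega)
  rw [Fintype.card_fin] at hcross
  have hNn : (N : ℝ) - n ≠ 0 := sub_ne_zero.2 (by exact_mod_cast hn.ne')
  have hm : ((n' - (n - a) : ℕ) : ℝ) = n' + a - n := by
    rw [Nat.cast_sub hlow, Nat.cast_sub ha]; ring
  calc _ = ((n' - (n - a) : ℕ) : ℝ) / (N - n) := by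
        rw [div_eq_div_iff (Nat.cast_ne_zero.2 hpos.ne') hNn, ← Nat.cast_sub hn.le]
        exact_mod_cast hcross
    _ = _ := by
        have : (N : ℝ) ≠ 0 := Nat.cast_ne_zero.2 (by omega)
        have : (n : ℝ) ≠ 0 := Nat.cast_ne_zero.2 (by omega)
        rw [hm]
        field_simp
        ring
end

section
/- For a sequence of 2×2 stochastic matrices P_r with rows (1-β_r, β_r) and (α, 1-α) interpreted as transition matrices of the indicator chain I_k(τ_r), the probability P(k ∈ s(τ_{r'}) | k ∈ s(τ_r)) satisfies the explicit formula (1 - f(τ_r))·∏_{q=r+1}^{r'} (1 - α - f(τ_q))/(1 - f(τ_{q-1})) + f(τ_{r'}), where f(τ_q) is the marginal inclusion probability at step q and β_q = (f(τ_q) - (1-α)f(τ_{q-1}))/(1 - f(τ_{q-1})). -/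
/-!
One step of the chain multiplies the deviation `p r r' - f r'` of the conditional probability
from the marginal by `λ_{r'+1}`. Starting from `p r r - f r = 1 - f r`, the deviation after
`r' - r` steps is `(1 - f r) ∏ λ_q`.
-/

open Finset

theorem eq_mul_prod_Icc_of_succ_eq_mul {M : Type*} [CommMonoid M] {u c : ℕ → M} {r : ℕ}
    (h : ∀ n, r ≤ n → u (n + 1) = u n * c (n + 1)) :
    ∀ n, r ≤ n → u n = u r * ∏ i ∈ Icc (r + 1) n, c i := by
  intro n hn
  induction n, hn using Nat.le_induction with
  | base => simp
  | succ n hrn ih => rw [h n hrn, ih, prod_Icc_succ_top (by omega : r + 1 ≤ n + 1), mul_assoc]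

theorem two_state_step_sub_marginal (x a b l : ℝ) :
    x * ((1 - a) * l + b) + (1 - x) * (b - a * l) - b = (x - a) * l := by
  ring

theorem markov_multistep_in_sample_general (f : ℕ → ℝ)
    (lam : ℕ → ℝ)
    (p : ℕ → ℕ → ℝ)
    (hp_refl : ∀ r, p r r = 1)
    (hp_rec : ∀ r r', r ≤ r' →
      p r (r' + 1) = p r r' * ((1 - f r') * lam (r' + 1) + f (r' + 1)) +
        (1 - p r r') * (f (r' + 1) - f r' * lam (r' + 1))) :
    ∀ r r', r ≤ r' →
      p r r' = (1 - f r) * (∏ i ∈ Finset.Icc (r + 1) r', lam i) + f r' := by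
  intro r r' h
  have hdev := eq_mul_prod_Icc_of_succ_eq_mul (u := fun n ↦ p r n - f n) (c := lam)
    (fun n hn ↦ by simp only [hp_rec r n hn, two_state_step_sub_marginal]) r' h
  simp only [hp_refl] at hdev
  linarith

/-- Multi-step transition probability of the inclusion-indicator Markov chain
(Lemma 2, "in-sample" case).  Let `p r r' = P(state 1 at τ_{r'} | state 1 at τ_r)`
and `q r r' = P(state 1 at τ_{r'} | state 0 at τ_r)`.  The one-step transitions are
`P(1|1) = (1 - f(τ_{q-1}))λ_q + f(τ_q)` and `P(1|0) = f(τ_q) - f(τ_{q-1})λ_q` with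
`λ_q = (1 - α - f(τ_q))/(1 - f(τ_{q-1}))`, and the multi-step probabilities satisfy
the Chapman–Kolmogorov recursion.  Then
`p r r' = (1 - f(τ_r)) ∏_{q=r+1}^{r'} λ_q + f(τ_{r'})` for `r ≤ r'`. -/
theorem markov_multistep_in_sample (α : ℝ) (f : ℕ → ℝ)
    (hf : ∀ r, 0 < f r ∧ f r < 1)
    (lam : ℕ → ℝ) (hlam : ∀ q, lam q = (1 - α - f q) / (1 - f (q - 1)))
    (p q : ℕ → ℕ → ℝ)
    (hp_refl : ∀ r, p r r = 1) (hq_refl : ∀ r, q r r = 0)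
    (hp_rec : ∀ r r', r ≤ r' →
      p r (r' + 1) = p r r' * ((1 - f r') * lam (r' + 1) + f (r' + 1)) +
        (1 - p r r') * (f (r' + 1) - f r' * lam (r' + 1)))
    (hq_rec : ∀ r r', r ≤ r' →
      q r (r' + 1) = q r r' * ((1 - f r') * lam (r' + 1) + f (r' + 1)) +
        (1 - q r r') * (f (r' + 1) - f r' * lam (r' + 1))) :
    ∀ r r', r ≤ r' →
      p r r' = (1 - f r) * (∏ i ∈ Finset.Icc (r + 1) r', lam i) + f r' :=
  markov_multistep_in_sample_general f lam p hp_refl hp_rec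
end

section
/- Under the same multi-step two-state Markov chain, P(state 1 at τ_{r'} | state 0 at τ_r) = f(τ_{r'}) - f(τ_r)·∏_{q=r+1}^{r'} λ_q, where λ_q = (1 - α - f(τ_q))/(1 - f(τ_{q-1})). -/
/-!
One step of the chain maps a probability `f n - d` of being in state 1 to `f (n + 1) - d * λ (n + 1)`:
the deviation from the marginal is multiplied by `λ`. Starting in state 0 the deviation is `f r`.
-/

open Finset

theorem transition_marginal_sub (fₙ fₙ₁ l d : ℝ) :
    (fₙ - d) * ((1 - fₙ) * l + fₙ₁) + (1 - (fₙ - d)) * (fₙ₁ - fₙ * l) = fₙ₁ - d * l := by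
  ring

theorem eq_marginal_sub_mul_prod_of_transition (f lam x : ℕ → ℝ) (r : ℕ) (d : ℝ)
    (hx_start : x r = f r - d)
    (hx_rec : ∀ n, r ≤ n →
      x (n + 1) = x n * ((1 - f n) * lam (n + 1) + f (n + 1)) +
        (1 - x n) * (f (n + 1) - f n * lam (n + 1))) :
    ∀ n, r ≤ n → x n = f n - d * ∏ i ∈ Icc (r + 1) n, lam i := by
  intro n hn
  induction n, hn using Nat.le_induction with
  | base => simp [hx_start]
  | succ n hrn ih =>
    rw [hx_rec n hrn, ih, transition_marginal_sub, prod_Icc_succ_top (by omega), mul_assoc]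

theorem markov_multistep_out_of_sample_general (f : ℕ → ℝ)
    (lam : ℕ → ℝ)
    (q : ℕ → ℕ → ℝ)
    (hq_refl : ∀ r, q r r = 0)
    (hq_rec : ∀ r r', r ≤ r' →
      q r (r' + 1) = q r r' * ((1 - f r') * lam (r' + 1) + f (r' + 1)) +
        (1 - q r r') * (f (r' + 1) - f r' * lam (r' + 1))) :
    ∀ r r', r ≤ r' →
      q r r' = f r' - f r * (∏ i ∈ Finset.Icc (r + 1) r', lam i) := fun r =>
  eq_marginal_sub_mul_prod_of_transition f lam (q r) r (f r) (by rw [hq_refl, sub_self])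
    (hq_rec r)

/-- Multi-step transition probability of the inclusion-indicator Markov chain
(Lemma 2, "out-of-sample" case).  Let `p r r' = P(state 1 at τ_{r'} | state 1 at τ_r)`
and `q r r' = P(state 1 at τ_{r'} | state 0 at τ_r)`.  The one-step transitions are
`P(1|1) = (1 - f(τ_{q-1}))λ_q + f(τ_q)` and `P(1|0) = f(τ_q) - f(τ_{q-1})λ_q` with
`λ_q = (1 - α - f(τ_q))/(1 - f(τ_{q-1}))`, and the multi-step probabilities satisfy
the Chapman–Kolmogorov recursion.  Then
`q r r' = f(τ_{r'}) - f(τ_r) ∏_{q=r+1}^{r'} λ_q` for `r ≤ r'`. -/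
theorem markov_multistep_out_of_sample (α : ℝ) (f : ℕ → ℝ)
    (hf : ∀ r, 0 < f r ∧ f r < 1)
    (lam : ℕ → ℝ) (hlam : ∀ q, lam q = (1 - α - f q) / (1 - f (q - 1)))
    (p q : ℕ → ℕ → ℝ)
    (hp_refl : ∀ r, p r r = 1) (hq_refl : ∀ r, q r r = 0)
    (hp_rec : ∀ r r', r ≤ r' →
      p r (r' + 1) = p r r' * ((1 - f r') * lam (r' + 1) + f (r' + 1)) +
        (1 - p r r') * (f (r' + 1) - f r' * lam (r' + 1)))
    (hq_rec : ∀ r r', r ≤ r' →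
      q r (r' + 1) = q r r' * ((1 - f r') * lam (r' + 1) + f (r' + 1)) +
        (1 - q r r') * (f (r' + 1) - f r' * lam (r' + 1))) :
    ∀ r r', r ≤ r' →
      q r r' = f r' - f r * (∏ i ∈ Finset.Icc (r + 1) r', lam i) :=
  markov_multistep_out_of_sample_general f lam q hq_refl hq_rec
end

section
/- If a 3×3 stochastic matrix P* has entries [P*]_{1j}, [P*]_{3j} and middle row satisfying [P*]_{2j} = ([P*]_{1j})^{1/2}([P*]_{3j})^{1/2} for j = 1, 3 (with all entries nonnegative and rows summing to 1), and Q_r = P*_1 ⋯ P*_r is a product of such matrices, then ([Q_r]_{11})^{1/2} + ([Q_r]_{13})^{1/2} = 1 for all r ≥ 1, where P*_q is the matrix with first row ((1-β_q)², 2(1-β_q)β_q, β_q²), second row (α(1-β_q), αβ_q + (1-α)(1-β_q), (1-α)β_q), third row (α², 2α(1-α), (1-α)²), with α, β_q ∈ [0,1]. -/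
/-!
Row `i` of `P*(β)` is the law of the number of ones among two independent bits after each bit
independently moves `0 → 1` with probability `β` and `1 → 0` with probability `α`, starting from
`i` ones. So `P*(β)` maps the binomial law `Bin(2, x)` to `Bin(2, (1 - x) β + x (1 - α))`, and the
first row of `Q_r`, the image of `Bin(2, 0)`, is `((1 - x)², 2 (1 - x) x, x²)` for some `x ∈ [0, 1]`.
-/

open Finset Matrix

/-- The one-step transition matrix of the pair-count chain under partial
replacement: rows `((1-β)², 2(1-β)β, β²)`, `(α(1-β), αβ + (1-α)(1-β), (1-α)β)`,
`(α², 2α(1-α), (1-α)²)`. -/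
def Pstar (α β : ℝ) : Matrix (Fin 3) (Fin 3) ℝ :=
  !![(1 - β) ^ 2, 2 * (1 - β) * β, β ^ 2;
     α * (1 - β), α * β + (1 - α) * (1 - β), (1 - α) * β;
     α ^ 2, 2 * α * (1 - α), (1 - α) ^ 2]

def binomialTwoRow (x : ℝ) : Fin 3 → ℝ :=
  ![(1 - x) ^ 2, 2 * (1 - x) * x, x ^ 2]

theorem binomialTwoRow_zero : binomialTwoRow 0 = Pi.single 0 1 := by
  ext i
  fin_cases i <;> simp [binomialTwoRow]

theorem binomialTwoRow_vecMul_Pstar (α β x : ℝ) :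
    binomialTwoRow x ᵥ* Pstar α β = binomialTwoRow ((1 - x) * β + x * (1 - α)) := by
  ext j
  fin_cases j <;>
    · simp [binomialTwoRow, Pstar, vecMul, dotProduct, Fin.sum_univ_three]
      ring

theorem sqrt_binomialTwoRow_zero_add_sqrt_binomialTwoRow_two {x : ℝ} (hx : x ∈ Set.Icc 0 1) :
    √(binomialTwoRow x 0) + √(binomialTwoRow x 2) = 1 := by
  simp only [binomialTwoRow, Matrix.cons_val]
  rw [Real.sqrt_sq (sub_nonneg.2 hx.2), Real.sqrt_sq hx.1]
  ring

theorem exists_binomialTwoRow_vecMul_prod_Pstar {α : ℝ} (hα : α ∈ Set.Icc 0 1) (l : List ℝ)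
    (hl : ∀ b ∈ l, b ∈ Set.Icc 0 1) {x : ℝ} (hx : x ∈ Set.Icc 0 1) :
    ∃ y ∈ Set.Icc 0 1, binomialTwoRow x ᵥ* (l.map (Pstar α)).prod = binomialTwoRow y := by
  induction l generalizing x with
  | nil => exact ⟨x, hx, by simp⟩
  | cons b l ih =>
    obtain ⟨hb0, hb1⟩ := hl b List.mem_cons_self
    obtain ⟨hα0, hα1⟩ := hα
    obtain ⟨hx0, hx1⟩ := hx
    have hstep : (1 - x) * b + x * (1 - α) ∈ Set.Icc 0 1 :=
      ⟨by nlinarith, by nlinarith⟩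
    rw [List.map_cons, List.prod_cons, ← vecMul_vecMul, binomialTwoRow_vecMul_Pstar]
    exact ih (fun c hc => hl c (List.mem_cons_of_mem b hc)) hstep

/-- For `Q_r = P*(β_1) ⋯ P*(β_r)` with `α, β_q ∈ [0,1]`, the (1,1) and (1,3)
entries satisfy `√([Q_r]_{11}) + √([Q_r]_{13}) = 1` for all `r ≥ 1`. -/
theorem pair_chain_sqrt_identity (α : ℝ) (hα : α ∈ Set.Icc (0 : ℝ) 1)
    (β : ℕ → ℝ) (hβ : ∀ q, β q ∈ Set.Icc (0 : ℝ) 1)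
    (Q : ℕ → Matrix (Fin 3) (Fin 3) ℝ)
    (hQ : ∀ r, Q r = (((List.range r).map (fun i => Pstar α (β (i + 1)))).prod)) :
    ∀ r, 1 ≤ r → Real.sqrt (Q r 0 0) + Real.sqrt (Q r 0 2) = 1 := by
  intro r _
  have hl : ∀ b ∈ (List.range r).map (fun i => β (i + 1)), b ∈ Set.Icc 0 1 := by
    simp only [List.mem_map]
    rintro _ ⟨i, -, rfl⟩
    exact hβ (i + 1)
  obtain ⟨y, hy, hrow⟩ :=
    exists_binomialTwoRow_vecMul_prod_Pstar hα _ hl (x := 0) ⟨le_rfl, zero_le_one⟩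
  have hQrow : Q r 0 = binomialTwoRow y := by
    rw [← hrow, binomialTwoRow_zero, single_one_vecMul, List.map_map, hQ r]
    rfl
  rw [hQrow]
  exact sqrt_binomialTwoRow_zero_add_sqrt_binomialTwoRow_two hy
end

section
/- With Q_r = P*(β_1)⋯P*(β_r) as above and β_q = (f_q - (1-α)f_{q-1})/(1 - f_{q-1}) for a sequence f_0,...,f_m ∈ [0,1) , the entry [Q_r]_{13} equals (f_r - f_0·∏_{q=1}^{r} (1 - α - f_q)/(1 - f_{q-1}))². -/
open Finset Matrix

def binomialRow (x : ℝ) : Fin 3 → ℝ :=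
  ![(1 - x) ^ 2, 2 * (1 - x) * x, x ^ 2]

theorem binomialRow_vecMul_Pstar (α β x : ℝ) :
    binomialRow x ᵥ* Pstar α β = binomialRow ((1 - x) * β + x * (1 - α)) := by
  ext j
  fin_cases j <;>
    simp [binomialRow, Pstar, vecMul, dotProduct, Fin.sum_univ_three] <;> ring

theorem Pstar_prod_row_zero (α : ℝ) (b x : ℕ → ℝ) (hx0 : x 0 = 0)
    (hx : ∀ r, x (r + 1) = (1 - x r) * b (r + 1) + x r * (1 - α)) (r : ℕ) :
    ((List.range r).map (fun i => Pstar α (b (i + 1)))).prod 0 = binomialRow (x r) := by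
  induction r with
  | zero =>
    ext j
    fin_cases j <;> simp [binomialRow, hx0]
  | succ r ih =>
    rw [List.range_succ, List.map_append, List.prod_append, List.map_singleton,
      List.prod_singleton, hx, ← binomialRow_vecMul_Pstar, ← ih]
    ext j
    simp only [mul_apply, vecMul, dotProduct]

section Reparametrization

variable {α β l a c : ℝ}

theorem eq_one_sub_sub_of_div (hc : c ≠ 1) (hβ : β = (a - (1 - α) * c) / (1 - c))
    (hl : l = (1 - α - a) / (1 - c)) : l = 1 - α - β := by
  have : 1 - c ≠ 0 := sub_ne_zero.mpr hc.symm
  rw [hl, hβ]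
  field_simp
  ring

theorem eq_affine_of_div (hc : c ≠ 1) (hβ : β = (a - (1 - α) * c) / (1 - c)) :
    a = (1 - c) * β + c * (1 - α) := by
  have : 1 - c ≠ 0 := sub_ne_zero.mpr hc.symm
  rw [hβ]
  field_simp
  ring

end Reparametrization

theorem pair_chain_entry_13_general (α : ℝ)
    (f : ℕ → ℝ) (hf : ∀ q, 0 ≤ f q ∧ f q < 1)
    (β : ℕ → ℝ)
    (hβdef : ∀ q, 1 ≤ q → β q = (f q - (1 - α) * f (q - 1)) / (1 - f (q - 1)))
    (lam : ℕ → ℝ) (hlam : ∀ q, 1 ≤ q → lam q = (1 - α - f q) / (1 - f (q - 1)))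
    (Q : ℕ → Matrix (Fin 3) (Fin 3) ℝ)
    (hQ : ∀ r, Q r = (((List.range r).map (fun i => Pstar α (β (i + 1)))).prod)) :
    ∀ r, 1 ≤ r →
      Q r 0 2 = (f r - f 0 * ∏ q ∈ Finset.Icc 1 r, lam q) ^ 2 := by
  intro r _
  set g : ℕ → ℝ := fun r => f r - f 0 * ∏ q ∈ Finset.Icc 1 r, lam q
  have hg : ∀ r, g (r + 1) = (1 - g r) * β (r + 1) + g r * (1 - α) := by
    intro r
    have hfr : f r ≠ 1 := (hf r).2.ne
    have hβr := hβdef (r + 1) r.succ_pos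
    have hlr := hlam (r + 1) r.succ_pos
    simp only [Nat.add_sub_cancel] at hβr hlr
    simp only [g, Finset.prod_Icc_succ_top (Nat.le_add_left 1 r),
      eq_one_sub_sub_of_div hfr hβr hlr, eq_affine_of_div hfr hβr]
    ring
  have hrow : Q r 0 = binomialRow (g r) := by
    rw [hQ]
    exact Pstar_prod_row_zero α β g (by simp [g]) hg r
  simpa [binomialRow] using congrFun hrow 2

/-- With `Q_r = P*(β_1) ⋯ P*(β_r)`, `β_q = (f_q - (1-α)f_{q-1})/(1 - f_{q-1})`
and `λ_q = (1 - α - f_q)/(1 - f_{q-1})`, the (1,3) entry of `Q_r` equals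
`(f_r - f_0 ∏_{q=1}^r λ_q)²`. -/
theorem pair_chain_entry_13 (α : ℝ) (hα : α ∈ Set.Icc (0 : ℝ) 1)
    (f : ℕ → ℝ) (hf : ∀ q, 0 ≤ f q ∧ f q < 1)
    (β : ℕ → ℝ)
    (hβdef : ∀ q, 1 ≤ q → β q = (f q - (1 - α) * f (q - 1)) / (1 - f (q - 1)))
    (hβ : ∀ q, 1 ≤ q → β q ∈ Set.Icc (0 : ℝ) 1)
    (lam : ℕ → ℝ) (hlam : ∀ q, 1 ≤ q → lam q = (1 - α - f q) / (1 - f (q - 1)))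
    (Q : ℕ → Matrix (Fin 3) (Fin 3) ℝ)
    (hQ : ∀ r, Q r = (((List.range r).map (fun i => Pstar α (β (i + 1)))).prod)) :
    ∀ r, 1 ≤ r →
      Q r 0 2 = (f r - f 0 * ∏ q ∈ Finset.Icc 1 r, lam q) ^ 2 :=
  pair_chain_entry_13_general α f hf β hβdef lam hlam Q hQ
end
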